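/- Finite-sample selection bound (conditional form of Theorem 1). Let p₀, q₁, …, q_m be probability densities on a σ-finite measure space (Ω, μ) with q₁ > 0 almost everywhere on {p₀ > 0}. Write v_i = d_H(p₀, q_i) for 1 ≤ i ≤ m and s = V(p₀, q₁), and assume 0 < s < ∞. Suppose there are constants M > 0, 0 < c < 1 and t > 0 such that d_K(p₀, q₁) ≤ M v₁² and M v₁² + s t < c v_i² for every 2 ≤ i ≤ m. Let P₀ be the measure with density p₀ and let X₁, …, Xₙ be i.i.d. with law P₀. Then P₀^n( ∃ i with 2 ≤ i ≤ m such that ∏_{k=1}^n q₁(X_k) ≤ ∏_{k=1}^n q_i(X_k) ) ≤ 1/(n t² s) + ∑_{i=2}^m exp( −n (1 − c) v_i² / 2 ). -/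

import Mathlib

open MeasureTheory Real

/-- A (probability) density on `(Ω, μ)`: a nonnegative measurable function integrating to 1. -/
def IsDensity {Ω : Type*} [MeasurableSpace Ω] (μ : Measure Ω) (p : Ω → ℝ) : Prop :=
  Measurable p ∧ (∀ x, 0 ≤ p x) ∧ Integrable p μ ∧ ∫ x, p x ∂μ = 1

/-- Squared Hellinger distance `d_H²(p, q) = ∫ (√p − √q)² dμ`. -/
noncomputable def hellSq {Ω : Type*} [MeasurableSpace Ω] (μ : Measure Ω) (p q : Ω → ℝ) : ℝ :=
  ∫ x, (Real.sqrt (p x) - Real.sqrt (q x)) ^ 2 ∂μ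

/-- Kullback–Leibler divergence `d_K(p, q) = ∫ p log(p/q) dμ`. -/
noncomputable def klD {Ω : Type*} [MeasurableSpace Ω] (μ : Measure Ω) (p q : Ω → ℝ) : ℝ :=
  ∫ x, p x * Real.log (p x / q x) ∂μ

/-- Second moment `V(p, q) = ∫ p (log(p/q))² dμ`. -/
noncomputable def klV {Ω : Type*} [MeasurableSpace Ω] (μ : Measure Ω) (p q : Ω → ℝ) : ℝ :=
  ∫ x, p x * (Real.log (p x / q x)) ^ 2 ∂μ

open ProbabilityTheory

/-! Let `ℓ = log (p₀ / q₁)` and `G` the event `∑ₖ ℓ(Xₖ) ≥ n (d_K(p₀, q₁) + t s)`. Since `ℓ` has mean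
`d_K` and second moment `s` under `P₀`, Chebyshev's inequality for the i.i.d. sum gives
`P₀ⁿ(G) ≤ n s / (n t s)² = 1 / (n t² s)`. Off `G`, the separation hypothesis turns
`∏ q₁(Xₖ) ≤ ∏ qᵢ(Xₖ)` into `∏ √(qᵢ/p₀)(Xₖ) ≥ exp (-n c vᵢ² / 2)`, and Markov's inequality applies
to this product: its mean is `(∫ √(p₀ qᵢ) dμ)ⁿ = (1 - vᵢ²/2)ⁿ ≤ exp (-n vᵢ² / 2)`. -/

section IID

variable {α : Type*} [MeasurableSpace α] (P : Measure α)

theorem measure_ge_le_ofReal_integral_div [IsFiniteMeasure P] {f : α → ℝ} (hf0 : 0 ≤ᵐ[P] f)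
    (hf : Integrable f P) {ε : ℝ} (hε : 0 < ε) :
    P {x | ε ≤ f x} ≤ ENNReal.ofReal ((∫ x, f x ∂P) / ε) := by
  rw [← ofReal_measureReal]
  refine ENNReal.ofReal_le_ofReal ?_
  rw [le_div_iff₀ hε, mul_comm]
  exact mul_meas_ge_le_integral_of_nonneg hf0 hf ε

variable [IsProbabilityMeasure P]

theorem measure_pi_prod_ge_le {r : α → ℝ} (hr0 : ∀ x, 0 ≤ r x) (hr : Integrable r P) (n : ℕ)
    {ε : ℝ} (hε : 0 < ε) :
    Measure.pi (fun _ : Fin n => P) {x | ε ≤ ∏ k, r (x k)}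
      ≤ ENNReal.ofReal ((∫ x, r x ∂P) ^ n / ε) := by
  have h := measure_ge_le_ofReal_integral_div (Measure.pi fun _ : Fin n => P)
    (ae_of_all _ fun x => Finset.prod_nonneg fun k _ => hr0 (x k))
    (Integrable.fintype_prod (f := fun _ => r) fun _ => hr) hε
  rwa [integral_fintype_prod_eq_pow, Fintype.card_fin] at h

theorem measure_pi_sum_ge_le {f : α → ℝ} (hf : MemLp f 2 P) (n : ℕ) {ε : ℝ} (hε : 0 < ε) :
    Measure.pi (fun _ : Fin n => P) {x | n * ∫ y, f y ∂P + ε ≤ ∑ k, f (x k)}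
      ≤ ENNReal.ofReal (n * Var[f; P] / ε ^ 2) := by
  set ν := Measure.pi fun _ : Fin n => P
  have hmap (k : Fin n) : ν.map (fun x => x k) = P := (measurePreserving_eval _ k).map_eq
  have hX (k : Fin n) : MemLp (fun x : Fin n → α => f (x k)) 2 ν :=
    hf.comp_measurePreserving (measurePreserving_eval _ k)
  have hmean (k : Fin n) : ∫ x, f (x k) ∂ν = ∫ y, f y ∂P := by
    rw [← integral_map (measurable_pi_apply k).aemeasurable (by rw [hmap]; exact hf.1), hmap]
  have hvar (k : Fin n) : Var[fun x => f (x k); ν] = Var[f; P] := by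
    rw [← hmap k] at hf ⊢
    exact (variance_map hf.1.aemeasurable (measurable_pi_apply k).aemeasurable).symm
  have hindep : iIndepFun (fun k (x : Fin n → α) => f (x k)) ν :=
    iIndepFun_pi fun _ => hf.1.aemeasurable
  have hsum_mean : ∫ x, ∑ k, f (x k) ∂ν = n * ∫ y, f y ∂P := by
    rw [integral_finsetSum _ fun k _ => (hX k).integrable one_le_two]
    simp [hmean]
  have hsum_var : Var[fun x => ∑ k, f (x k); ν] = n * Var[f; P] := by
    have := IndepFun.variance_sum (s := Finset.univ) (fun k _ => hX k)
      fun j _ k _ hjk => hindep.indepFun hjk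
    simp only [Finset.sum_fn] at this
    simp [this, hvar]
  calc ν {x | n * ∫ y, f y ∂P + ε ≤ ∑ k, f (x k)}
      ≤ ν {x | ε ≤ |∑ k, f (x k) - ∫ x, ∑ k, f (x k) ∂ν|} := by
        refine measure_mono fun x hx => ?_
        simp only [Set.mem_ofPred_eq, hsum_mean] at hx ⊢
        exact le_abs.2 (Or.inl (by linarith))
    _ ≤ ENNReal.ofReal (n * Var[f; P] / ε ^ 2) := by
        rw [← hsum_var]
        exact meas_ge_le_variance_div_sq (memLp_finsetSum _ fun k _ => hX k) hε

end IID

theorem exp_neg_half_le_prod_sqrt_div {ι : Type*} (s : Finset ι) {a b c : ι → ℝ}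
    (ha : ∀ k ∈ s, 0 < a k) (hb : ∀ k ∈ s, 0 < b k) (hc : ∀ k ∈ s, 0 ≤ c k) {L : ℝ}
    (hL : ∑ k ∈ s, log (a k / b k) ≤ L) (hbc : ∏ k ∈ s, b k ≤ ∏ k ∈ s, c k) :
    exp (-L / 2) ≤ ∏ k ∈ s, √(c k / a k) := by
  have hprod_a : 0 < ∏ k ∈ s, a k := Finset.prod_pos ha
  have hratio : exp (-L) ≤ ∏ k ∈ s, c k / a k := calc
    exp (-L) ≤ exp (-∑ k ∈ s, log (a k / b k)) := exp_le_exp.2 (neg_le_neg hL)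
    _ = ∏ k ∈ s, b k / a k := by
      rw [← Finset.sum_neg_distrib, exp_sum]
      refine Finset.prod_congr rfl fun k hk => ?_
      rw [← log_inv, inv_div, exp_log (div_pos (hb k hk) (ha k hk))]
    _ = (∏ k ∈ s, b k) / ∏ k ∈ s, a k := Finset.prod_div_distrib _ _
    _ ≤ (∏ k ∈ s, c k) / ∏ k ∈ s, a k := div_le_div_of_nonneg_right hbc hprod_a.le
    _ = ∏ k ∈ s, c k / a k := (Finset.prod_div_distrib _ _).symm
  rw [← sqrt_prod s fun k hk => div_nonneg (hc k hk) (ha k hk).le, exp_half]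
  exact sqrt_le_sqrt hratio

theorem mul_sqrt_div_self {a : ℝ} (ha : 0 ≤ a) (b : ℝ) : a * √(b / a) = √a * √b := by
  rcases ha.eq_or_lt with rfl | ha
  · simp
  rw [sqrt_div' b ha.le, mul_div_left_comm, div_sqrt]
  ring

section Density

variable {Ω : Type*} [MeasurableSpace Ω] {μ : Measure Ω}

theorem integral_withDensity_ofReal {p : Ω → ℝ} (hp : Measurable p) (hp0 : ∀ x, 0 ≤ p x)
    (f : Ω → ℝ) :
    ∫ x, f x ∂μ.withDensity (fun x => ENNReal.ofReal (p x)) = ∫ x, p x * f x ∂μ := by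
  rw [integral_withDensity_eq_integral_toReal_smul hp.ennreal_ofReal
    (ae_of_all _ fun _ => ENNReal.ofReal_lt_top)]
  simp [ENNReal.toReal_ofReal (hp0 _)]

theorem integrable_withDensity_ofReal_iff {p : Ω → ℝ} (hp : Measurable p) (hp0 : ∀ x, 0 ≤ p x)
    {f : Ω → ℝ} :
    Integrable f (μ.withDensity fun x => ENNReal.ofReal (p x))
      ↔ Integrable (fun x => p x * f x) μ := by
  rw [integrable_withDensity_iff_integrable_smul' hp.ennreal_ofReal
    (ae_of_all _ fun _ => ENNReal.ofReal_lt_top)]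
  simp [ENNReal.toReal_ofReal (hp0 _)]

theorem ae_withDensity_ofReal_pos_and {p q : Ω → ℝ} (hp : Measurable p)
    (hq : ∀ᵐ x ∂μ, 0 < p x → 0 < q x) :
    ∀ᵐ x ∂μ.withDensity (fun x => ENNReal.ofReal (p x)), 0 < p x ∧ 0 < q x := by
  refine (ae_withDensity_iff hp.ennreal_ofReal).2 (hq.mono fun x hx hpx => ?_)
  have hpx : 0 < p x := ENNReal.ofReal_pos.1 (pos_iff_ne_zero.2 hpx)
  exact ⟨hpx, hx hpx⟩

theorem IsDensity.integrable_sqrt_mul_sqrt {p q : Ω → ℝ} (hp : IsDensity μ p)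
    (hq : IsDensity μ q) :
    Integrable (fun x => √(p x) * √(q x)) μ := by
  obtain ⟨hpm, hp0, hpi, -⟩ := hp
  obtain ⟨hqm, hq0, hqi, -⟩ := hq
  refine (hpi.add hqi).mono' (hpm.sqrt.mul hqm.sqrt).aestronglyMeasurable
    (ae_of_all _ fun x => ?_)
  rw [norm_of_nonneg (by positivity), Pi.add_apply]
  nlinarith [sq_sqrt (hp0 x), sq_sqrt (hq0 x), sq_nonneg (√(p x) - √(q x))]

theorem IsDensity.integral_sqrt_mul_sqrt {p q : Ω → ℝ} (hp : IsDensity μ p)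
    (hq : IsDensity μ q) :
    ∫ x, √(p x) * √(q x) ∂μ = 1 - hellSq μ p q / 2 := by
  have hpq := hp.integrable_sqrt_mul_sqrt hq
  obtain ⟨-, hp0, hpi, hp1⟩ := hp
  obtain ⟨-, hq0, hqi, hq1⟩ := hq
  have hsq (x : Ω) : (√(p x) - √(q x)) ^ 2 = (p x + q x) - 2 * (√(p x) * √(q x)) := by
    rw [sub_sq, sq_sqrt (hp0 x), sq_sqrt (hq0 x)]
    ring
  rw [hellSq, integral_congr_ae (ae_of_all _ hsq),
    integral_sub (f := fun x => p x + q x) (hpi.add hqi) (hpq.const_mul 2),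
    integral_add hpi hqi, integral_const_mul, hp1, hq1]
  ring

end Density

section Selection

variable {Ω : Type*} [MeasurableSpace Ω] {μ : Measure Ω} {p q₁ q : Ω → ℝ}
  (P : Measure Ω) [IsProbabilityMeasure P]

theorem measure_pi_logLikelihoodRatio_lt_and_likelihood_le_le (hp : IsDensity μ p)
    (hq₁ : ∀ᵐ x ∂μ, 0 < p x → 0 < q₁ x) (hq : IsDensity μ q)
    (hP : P = μ.withDensity fun x => ENNReal.ofReal (p x)) (n : ℕ) (L : ℝ) :
    Measure.pi (fun _ : Fin n => P)
        {x | ∑ k, log (p (x k) / q₁ (x k)) < L ∧ ∏ k, q₁ (x k) ≤ ∏ k, q (x k)}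
      ≤ ENNReal.ofReal (exp ((L - n * hellSq μ p q) / 2)) := by
  set w := hellSq μ p q
  have hratio_eq (x : Ω) : p x * √(q x / p x) = √(p x) * √(q x) := mul_sqrt_div_self (hp.2.1 x) _
  have hratio_int : Integrable (fun x => √(q x / p x)) P := by
    rw [hP, integrable_withDensity_ofReal_iff hp.1 hp.2.1]
    simpa only [hratio_eq] using hp.integrable_sqrt_mul_sqrt hq
  have hratio_mean : ∫ x, √(q x / p x) ∂P = 1 - w / 2 := by
    rw [hP, integral_withDensity_ofReal hp.1 hp.2.1]
    simpa only [hratio_eq] using hp.integral_sqrt_mul_sqrt hq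
  have hpos₁ : ∀ᵐ x ∂P, 0 < p x ∧ 0 < q₁ x := hP ▸ ae_withDensity_ofReal_pos_and hp.1 hq₁
  have hpos : ∀ᵐ x ∂(Measure.pi fun _ : Fin n => P), ∀ k, 0 < p (x k) ∧ 0 < q₁ (x k) :=
    ae_all_iff.2 fun k =>
      Measure.tendsto_eval_ae_ae.eventually (p := fun y => 0 < p y ∧ 0 < q₁ y) hpos₁
  have haffinity : 0 ≤ 1 - w / 2 := hratio_mean ▸ integral_nonneg fun _ => sqrt_nonneg _
  calc _ ≤ Measure.pi (fun _ : Fin n => P) {x | exp (-L / 2) ≤ ∏ k, √(q (x k) / p (x k))} := by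
        refine measure_mono_ae (hpos.mono fun x hx hxE => ?_)
        exact exp_neg_half_le_prod_sqrt_div _ (fun k _ => (hx k).1) (fun k _ => (hx k).2)
          (fun k _ => hq.2.1 _) hxE.1.le hxE.2
    _ ≤ ENNReal.ofReal ((1 - w / 2) ^ n / exp (-L / 2)) := by
        rw [← hratio_mean]
        exact measure_pi_prod_ge_le P (fun _ => sqrt_nonneg _) hratio_int n (exp_pos _)
    _ ≤ ENNReal.ofReal (exp ((L - n * w) / 2)) := by
        refine ENNReal.ofReal_le_ofReal ?_
        rw [div_le_iff₀ (exp_pos _), ← exp_add]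
        calc (1 - w / 2) ^ n ≤ exp (-(w / 2)) ^ n :=
              pow_le_pow_left₀ haffinity (one_sub_le_exp_neg _) n
          _ = exp ((L - n * w) / 2 + -L / 2) := by
              rw [← exp_nat_mul]
              ring_nf

theorem measure_pi_logLikelihoodRatio_ge_le (hp : IsDensity μ p) (hq₁ : Measurable q₁)
    (hV : Integrable (fun x => p x * log (p x / q₁ x) ^ 2) μ)
    (hP : P = μ.withDensity fun x => ENNReal.ofReal (p x)) (n : ℕ) {ε : ℝ} (hε : 0 < ε) :
    Measure.pi (fun _ : Fin n => P)
        {x | n * klD μ p q₁ + ε ≤ ∑ k, log (p (x k) / q₁ (x k))}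
      ≤ ENNReal.ofReal (n * klV μ p q₁ / ε ^ 2) := by
  set ℓ : Ω → ℝ := fun x => log (p x / q₁ x)
  have hℓ_meas : AEStronglyMeasurable ℓ P := (hp.1.div hq₁).log.aestronglyMeasurable
  have hℓ : MemLp ℓ 2 P := by
    rw [memLp_two_iff_integrable_sq hℓ_meas, hP, integrable_withDensity_ofReal_iff hp.1 hp.2.1]
    exact hV
  have hmean : ∫ x, ℓ x ∂P = klD μ p q₁ := by
    rw [hP, integral_withDensity_ofReal hp.1 hp.2.1, klD]
  have hvar : Var[ℓ; P] ≤ klV μ p q₁ := by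
    refine (variance_le_expectation_sq hℓ_meas).trans_eq ?_
    rw [hP, integral_withDensity_ofReal hp.1 hp.2.1, klV]
    rfl
  calc _ ≤ ENNReal.ofReal (n * Var[ℓ; P] / ε ^ 2) := hmean ▸ measure_pi_sum_ge_le P hℓ n hε
    _ ≤ _ := by gcongr

end Selection

theorem measure_setOf_exists_le_add_sum_compl_inter {α ι : Type*} [MeasurableSpace α]
    (μ : Measure α) (G : Set α) (s : Finset ι) (E : ι → Set α) :
    μ {x | ∃ i ∈ s, x ∈ E i} ≤ μ G + ∑ i ∈ s, μ (Gᶜ ∩ E i) := calc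
  _ ≤ μ (G ∪ ⋃ i ∈ s, Gᶜ ∩ E i) := by
        refine measure_mono fun x ⟨i, hi, hx⟩ => ?_
        by_cases hG : x ∈ G
        · exact Or.inl hG
        · exact Or.inr (Set.mem_biUnion hi ⟨hG, hx⟩)
  _ ≤ μ G + μ (⋃ i ∈ s, Gᶜ ∩ E i) := measure_union_le _ _
  _ ≤ μ G + ∑ i ∈ s, μ (Gᶜ ∩ E i) := by gcongr; exact measure_biUnion_finset_le _ _

theorem cv_selection_bound_general {Ω : Type*} [MeasurableSpace Ω]
    (μ : Measure Ω) (p₀ : Ω → ℝ) (m : ℕ) (q : ℕ → Ω → ℝ)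
    (hp₀ : IsDensity μ p₀)
    (hq : ∀ i ∈ Finset.Icc 1 m, IsDensity μ (q i))
    (hq₁pos : ∀ᵐ x ∂μ, 0 < p₀ x → 0 < q 1 x)
    (hVint : Integrable (fun x => p₀ x * (Real.log (p₀ x / q 1 x)) ^ 2) μ)
    (hVpos : 0 < klV μ p₀ (q 1))
    (M c t : ℝ) (ht : 0 < t)
    (hdK : klD μ p₀ (q 1) ≤ M * hellSq μ p₀ (q 1))
    (hsep : ∀ i ∈ Finset.Icc 2 m,
      M * hellSq μ p₀ (q 1) + klV μ p₀ (q 1) * t < c * hellSq μ p₀ (q i))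
    (P₀ : Measure Ω) [IsProbabilityMeasure P₀]
    (hP₀ : P₀ = μ.withDensity fun x => ENNReal.ofReal (p₀ x))
    (n : ℕ) (hn : 0 < n) :
    (Measure.pi fun _ : Fin n => P₀)
        {x : Fin n → Ω |
          ∃ i ∈ Finset.Icc 2 m, ∏ k : Fin n, q 1 (x k) ≤ ∏ k : Fin n, q i (x k)}
      ≤ ENNReal.ofReal (1 / ((n : ℝ) * t ^ 2 * klV μ p₀ (q 1)) +
          ∑ i ∈ Finset.Icc 2 m, Real.exp (-(n : ℝ) * (1 - c) * hellSq μ p₀ (q i) / 2)) := by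
  rcases (Finset.Icc 2 m).eq_empty_or_nonempty with hm | ⟨i₀, hi₀⟩
  · simp [hm]
  set G := {x : Fin n → Ω |
    n * klD μ p₀ (q 1) + n * t * klV μ p₀ (q 1) ≤ ∑ k, log (p₀ (x k) / q 1 (x k))}
  have hq₁ : IsDensity μ (q 1) := hq 1 (by simp at hi₀ ⊢; omega)
  have hG : Measure.pi (fun _ : Fin n => P₀) G
      ≤ ENNReal.ofReal (1 / (n * t ^ 2 * klV μ p₀ (q 1))) := by
    refine (measure_pi_logLikelihoodRatio_ge_le P₀ hp₀ hq₁.1 hVint hP₀ n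
      (by positivity)).trans_eq (congrArg _ ?_)
    field_simp
  have hE : ∀ i ∈ Finset.Icc 2 m, Measure.pi (fun _ : Fin n => P₀)
      (Gᶜ ∩ {x | ∏ k, q 1 (x k) ≤ ∏ k, q i (x k)})
        ≤ ENNReal.ofReal (exp (-(n : ℝ) * (1 - c) * hellSq μ p₀ (q i) / 2)) := by
    intro i hi
    refine (measure_mono fun x hx => ?_).trans
      ((measure_pi_logLikelihoodRatio_lt_and_likelihood_le_le P₀ hp₀ hq₁pos
        (hq i (Finset.Icc_subset_Icc_left one_le_two hi)) hP₀ n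
        (n * (c * hellSq μ p₀ (q i)))).trans_eq (by ring_nf))
    obtain ⟨hxG, hxE⟩ := hx
    simp only [G, Set.mem_compl_iff, Set.mem_ofPred_eq, not_le] at hxG
    refine ⟨?_, hxE⟩
    nlinarith [hsep i hi]
  calc _ ≤ _ := measure_setOf_exists_le_add_sum_compl_inter _ G _
        fun i => {x : Fin n → Ω | ∏ k, q 1 (x k) ≤ ∏ k, q i (x k)}
    _ ≤ _ := add_le_add hG (Finset.sum_le_sum hE)
    _ = _ := by
        rw [ENNReal.ofReal_add (by positivity) (by positivity),
          ENNReal.ofReal_sum_of_nonneg fun i _ => (exp_pos _).le]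

/-- Finite-sample selection bound (conditional form of Theorem 1): the probability that some
competing density `q i` (`2 ≤ i ≤ m`) attains likelihood at least that of `q 1` is at most
`1/(n t² s) + ∑_{i=2}^m exp(−n(1−c)v_i²/2)`. -/
theorem cv_selection_bound {Ω : Type*} [MeasurableSpace Ω]
    (μ : Measure Ω) [SigmaFinite μ] (p₀ : Ω → ℝ) (m : ℕ) (q : ℕ → Ω → ℝ)
    (hp₀ : IsDensity μ p₀)
    (hq : ∀ i ∈ Finset.Icc 1 m, IsDensity μ (q i))
    (hq₁pos : ∀ᵐ x ∂μ, 0 < p₀ x → 0 < q 1 x)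
    (hVint : Integrable (fun x => p₀ x * (Real.log (p₀ x / q 1 x)) ^ 2) μ)
    (hVpos : 0 < klV μ p₀ (q 1))
    (M c t : ℝ) (hM : 0 < M) (hc0 : 0 < c) (hc1 : c < 1) (ht : 0 < t)
    (hdK : klD μ p₀ (q 1) ≤ M * hellSq μ p₀ (q 1))
    (hsep : ∀ i ∈ Finset.Icc 2 m,
      M * hellSq μ p₀ (q 1) + klV μ p₀ (q 1) * t < c * hellSq μ p₀ (q i))
    (P₀ : Measure Ω) [IsProbabilityMeasure P₀]
    (hP₀ : P₀ = μ.withDensity fun x => ENNReal.ofReal (p₀ x))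
    (n : ℕ) (hn : 0 < n) :
    (Measure.pi fun _ : Fin n => P₀)
        {x : Fin n → Ω |
          ∃ i ∈ Finset.Icc 2 m, ∏ k : Fin n, q 1 (x k) ≤ ∏ k : Fin n, q i (x k)}
      ≤ ENNReal.ofReal (1 / ((n : ℝ) * t ^ 2 * klV μ p₀ (q 1)) +
          ∑ i ∈ Finset.Icc 2 m, Real.exp (-(n : ℝ) * (1 - c) * hellSq μ p₀ (q i) / 2)) :=
  cv_selection_bound_general μ p₀ m q hp₀ hq hq₁pos hVint hVpos M c t ht hdK hsep P₀ hP₀ n hn
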